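/- Let p be a prime, k and m positive integers, γ ≥ 1 a real number, K a finite field of characteristic p, V an F_p-vector space, and Φ : K^m → V an injective F_p-linear map. Let C ⊆ K \ {0} be a set such that for every finite S ⊆ C and every b : S → F_p with Σ_{a∈S} b(a) ≠ 0 in F_p one has Σ_{a∈S} b(a)·a ≠ 0 in K. Let W be a finite set of vectors in K^m and c : W → {1,…,k} a coloring. Assume every finite subset of W of size at most γ·k is linearly independent over K. Then for every function x : W × C → F_p with Σ_{(w,a)} x(w,a)·(e_{c(w)}, Φ(a·w)) = (1_k, 0) in F_p^k × V, the support of x has size strictly greater than γ·k. -/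

import Mathlib

/-!
Suppose the support of `x` had at most `γ k` elements. The vectors `w` it touches are then
`K`-linearly independent. The `V`-component of the relation, pulled back along the injective
`Φ`, says `∑_w (∑_a x(w,a) a) w = 0`, so every `K`-weight `∑_a x(w,a) a` vanishes; by the
hypothesis on `C` so does every `F_p`-mass `∑_a x(w,a)`. But the `F_p^k`-component is the sum of
the masses placed at the colours `c w`, and it equals `1_k ≠ 0`.
-/

open Finset

theorem eq_zero_of_linearIndepOn_support {ι R M : Type*} [Fintype ι] [Ring R] [AddCommGroup M]
    [Module R M] {v : ι → M} {g : ι → R} (hv : LinearIndepOn R v {i | g i ≠ 0})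
    (hg : ∑ i, g i • v i = 0) (i : ι) : g i = 0 := by
  classical
  by_contra hi
  refine hi (linearIndepOn_iff''.1 hv {j | g j ≠ 0} g (by simp) (by simp) ?_ i (by simpa))
  rwa [sum_filter_of_ne fun j _ h => left_ne_zero_of_smul h]

theorem sum_prod_smul_eq_sum_smul {α β R M : Type*} [Fintype α] [Fintype β] [Semiring R]
    [AddCommMonoid M] [Module R M] (x : α × β → R) (f : α → M) :
    ∑ e, x e • f e.1 = ∑ i, (∑ j, x (i, j)) • f i := by
  simp only [Fintype.sum_prod_type, sum_smul]

theorem exists_sum_ne_zero_of_sum_prod_smul_ne_zero {α β R M : Type*} [Fintype α] [Fintype β]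
    [Semiring R] [AddCommMonoid M] [Module R M] {x : α × β → R} {f : α → M}
    (h : ∑ e, x e • f e.1 ≠ 0) : ∃ i, ∑ j, x (i, j) ≠ 0 := by
  contrapose! h
  simp [sum_prod_smul_eq_sum_smul, h]

theorem sum_prod_smul_smul {α β R K M : Type*} [Fintype α] [Fintype β] [Semiring R]
    [Semiring K] [AddCommMonoid M] [Module R K] [Module K M] [Module R M] [IsScalarTower R K M]
    (x : α × β → R) (a : β → K) (v : α → M) :
    ∑ e, x e • (a e.2 • v e.1) = ∑ i, (∑ j, x (i, j) • a j) • v i := by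
  simp only [Fintype.sum_prod_type, sum_smul, smul_assoc]

theorem sum_coe_sort_smul_ne_zero {R K : Type*} [AddCommMonoid R] [AddCommMonoid K] [SMul R K]
    {C : Finset K} (hC : ∀ b : K → R, ∑ a ∈ C, b a ≠ 0 → ∑ a ∈ C, b a • a ≠ 0) {y : C → R}
    (hy : ∑ a, y a ≠ 0) : ∑ a, y a • (a : K) ≠ 0 := by
  classical
  let b : K → R := fun a => if h : a ∈ C then y ⟨a, h⟩ else 0
  have hb (a : C) : b a = y a := dif_pos a.2
  simp only [← hb, sum_coe_sort C b, sum_coe_sort C (fun a => b a • a)] at hy ⊢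
  exact hC b hy

theorem stmt7 (p : ℕ) (k m : ℕ) (hk : 0 < k)
    (γ : ℝ)
    {K : Type*} [Field K] [Algebra (ZMod p) K]
    {V : Type*} [AddCommGroup V] [Module (ZMod p) V]
    (Φ : (Fin m → K) →ₗ[ZMod p] V) (hΦ : Function.Injective Φ)
    (C : Finset K)
    (hCsum : ∀ S : Finset K, S ⊆ C → ∀ b : K → ZMod p,
      ∑ a ∈ S, b a ≠ 0 → ∑ a ∈ S, b a • a ≠ 0)
    (W : Finset (Fin m → K)) (c : {w // w ∈ W} → Fin k)
    (hW : ∀ S : Finset (Fin m → K), S ⊆ W → (S.card : ℝ) ≤ γ * k →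
      LinearIndependent K (fun v : S => (v : Fin m → K)))
    (x : {w // w ∈ W} × {a : K // a ∈ C} → ZMod p)
    (hx : ∑ e : {w // w ∈ W} × {a : K // a ∈ C},
        x e • (((Pi.single (c e.1) 1 : Fin k → ZMod p),
          Φ ((e.2 : K) • (e.1 : Fin m → K))) : (Fin k → ZMod p) × V)
        = (((fun _ => 1 : Fin k → ZMod p), 0) : (Fin k → ZMod p) × V)) :
    γ * k < ((Finset.univ.filter fun e => x e ≠ 0).card : ℝ) := by
  classical
  have : Nontrivial (ZMod p) := (algebraMap (ZMod p) K).domain_nontrivial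
  by_contra! hsmall
  let coef (w : W) : K := ∑ a : C, x (w, a) • (a : K)
  have hcomb : ∑ w, coef w • (w : Fin m → K) = 0 := hΦ <| by
    rw [← sum_prod_smul_smul, map_sum, map_zero]
    simpa [Prod.snd_sum] using congrArg Prod.snd hx
  have hind : LinearIndepOn K Subtype.val {w | coef w ≠ 0} := by
    let T := (univ.filter fun e => x e ≠ 0).image fun e => (e.1 : Fin m → K)
    have hT : LinearIndepOn K id (T : Set (Fin m → K)) :=
      hW T (image_subset_iff.2 fun e _ => e.1.2) ((Nat.cast_le.2 card_image_le).trans hsmall)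
    rw [linearIndepOn_iff_image Subtype.val_injective.injOn]
    refine hT.mono ?_
    rintro _ ⟨w, hw, rfl⟩
    obtain ⟨a, -, ha⟩ := exists_ne_zero_of_sum_ne_zero hw
    exact mem_image.2 ⟨(w, a), by simpa using left_ne_zero_of_smul ha, rfl⟩
  have hcolour : ∑ e, x e • (Pi.single (c e.1) 1 : Fin k → ZMod p) = fun _ => 1 := by
    simpa [Prod.fst_sum] using congrArg Prod.fst hx
  obtain ⟨w, hw⟩ := exists_sum_ne_zero_of_sum_prod_smul_ne_zero
      (f := fun w => (Pi.single (c w) 1 : Fin k → ZMod p)) <|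
    hcolour.trans_ne (Function.ne_iff.2 ⟨⟨0, hk⟩, one_ne_zero⟩)
  exact sum_coe_sort_smul_ne_zero (hCsum C subset_rfl) hw
    (eq_zero_of_linearIndepOn_support hind hcomb w)
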